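/- arXiv:1007.0714 — 10 statements merged into one kernel-verified Lean document; each statement's English description precedes it below -/
import Mathlib

section
/- If f : I → ℝ solves the restricted Cauchy equation f(x+x') = f(x) + f(x') for all x, x', x+x' ∈ I, and f is continuous at a point, then there exists c ∈ ℝ such that f(x) = c·x for all x ∈ I. -/
/-! The restricted Cauchy equation makes `f` homogeneous with respect to the ratios `m / k ≤ 1`
along each segment `[0, b] ⊆ I`. Continuity at a single point `a` becomes continuity at `0` along
`[0, a]`, because `f (t a) = f a - f ((1 - t) a)`. Splitting `s b` as `⌊s k⌋ / k • b` plus a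
remainder that tends to `0` then gives `f (s b) = s f b` for every real `s ∈ [0, 1]`. Oddness
covers the other side of `0`, and `f x = n f (x / n)` reaches all of `I`. -/

open Set Filter Topology

theorem StarConvex.mul_mem {I : Set ℝ} (hI : StarConvex ℝ 0 I) {x t : ℝ} (hx : x ∈ I)
    (ht : t ∈ Icc (0 : ℝ) 1) : t * x ∈ I :=
  hI.smul_mem hx ht.1 ht.2

theorem StarConvex.div_mem {I : Set ℝ} (hI : StarConvex ℝ 0 I) {x r : ℝ} (hx : x ∈ I)
    (hr : 1 ≤ r) : x / r ∈ I := by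
  simpa [div_eq_inv_mul] using
    hI.mul_mem hx ⟨inv_nonneg.2 (zero_le_one.trans hr), inv_le_one_of_one_le₀ hr⟩

def IsAdditiveOn (f : ℝ → ℝ) (I : Set ℝ) : Prop :=
  ∀ x ∈ I, ∀ x' ∈ I, x + x' ∈ I → f (x + x') = f x + f x'

namespace IsAdditiveOn

variable {f : ℝ → ℝ} {I : Set ℝ}

theorem map_zero (hf : IsAdditiveOn f I) (h0 : 0 ∈ I) : f 0 = 0 := by
  have h := hf 0 h0 0 h0 (by simpa using h0)
  rw [add_zero] at h
  linarith

theorem map_neg (hf : IsAdditiveOn f I) (h0 : 0 ∈ I) {x : ℝ} (hx : x ∈ I) (hnx : -x ∈ I) :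
    f (-x) = -f x := by
  have h := hf x hx (-x) hnx (by simpa using h0)
  rw [add_neg_cancel, hf.map_zero h0] at h
  linarith

theorem map_natCast_mul (hf : IsAdditiveOn f I) (hI : StarConvex ℝ 0 I) (n : ℕ) {x : ℝ}
    (hx : x ∈ I) (hnx : (n : ℝ) * x ∈ I) : f (n * x) = n * f x := by
  induction n with
  | zero => simpa using hf.map_zero (hI.mem ⟨x, hx⟩)
  | succ n ih =>
    have hn : (n : ℝ) * x ∈ I := by
      have := hI.mul_mem hnx (t := n / (n + 1 : ℕ))
        ⟨by positivity, div_le_one_of_le₀ (by simp) (by positivity)⟩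
      rwa [← mul_assoc, div_mul_cancel₀ _ (by positivity)] at this
    rw [Nat.cast_succ, add_one_mul] at hnx ⊢
    rw [hf _ hn x hx hnx, ih hn, add_one_mul]

theorem map_natCast_div_mul (hf : IsAdditiveOn f I) (hI : StarConvex ℝ 0 I) {m k : ℕ}
    (hmk : m ≤ k) {x : ℝ} (hx : x ∈ I) : f (m / k * x) = m / k * f x := by
  rcases k.eq_zero_or_pos with rfl | hk
  · simpa using hf.map_zero (hI.mem ⟨x, hx⟩)
  have hkx : (k : ℝ) * (x / k) = x := mul_div_cancel₀ x (by positivity)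
  have hmx : (m : ℝ) * (x / k) = m / k * x := by ring
  have hy : x / k ∈ I := hI.div_mem hx (by exact_mod_cast hk)
  have hmk' : (m : ℝ) / k ∈ Icc (0 : ℝ) 1 :=
    ⟨by positivity, div_le_one_of_le₀ (by exact_mod_cast hmk) k.cast_nonneg⟩
  have hfx := hf.map_natCast_mul hI k hy (by rwa [hkx])
  rw [hkx] at hfx
  rw [← hmx, hf.map_natCast_mul hI m hy (by rw [hmx]; exact hI.mul_mem hx hmk'), hfx]
  field_simp

theorem map_mul_of_continuousWithinAt (hf : IsAdditiveOn f I) (hI : StarConvex ℝ 0 I) {b : ℝ}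
    (hb : b ∈ I) (hc : ContinuousWithinAt (fun t => f (t * b)) (Icc 0 1) 0) {s : ℝ}
    (hs : s ∈ Icc (0 : ℝ) 1) : f (s * b) = s * f b := by
  set q : ℕ → ℝ := fun k => ⌊s * k⌋₊ / k
  have hq : Tendsto q atTop (𝓝 s) :=
    (tendsto_nat_floor_mul_div_atTop hs.1).comp tendsto_natCast_atTop_atTop
  have hq₀ (k : ℕ) : 0 ≤ q k := by positivity
  have hqs (k : ℕ) : q k ≤ s :=
    div_le_of_le_mul₀ k.cast_nonneg hs.1 (Nat.floor_le (mul_nonneg hs.1 k.cast_nonneg))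
  have hu (k : ℕ) : s - q k ∈ Icc (0 : ℝ) 1 :=
    ⟨sub_nonneg.2 (hqs k), by linarith [hq₀ k, hs.2]⟩
  have hsplit (k : ℕ) : f (s * b) = q k * f b + f ((s - q k) * b) := by
    have hmk : ⌊s * k⌋₊ ≤ k := Nat.floor_le_of_le (mul_le_of_le_one_left k.cast_nonneg hs.2)
    have hfq : f (q k * b) = q k * f b := hf.map_natCast_div_mul hI hmk hb
    have hsum : q k * b + (s - q k) * b = s * b := by ring
    rw [← hfq, ← hf _ (hI.mul_mem hb ⟨hq₀ k, (hqs k).trans hs.2⟩) _ (hI.mul_mem hb (hu k))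
      (by rw [hsum]; exact hI.mul_mem hb hs), hsum]
  have hlim : Tendsto (fun k => q k * f b + f ((s - q k) * b)) atTop (𝓝 (s * f b + 0)) := by
    refine (hq.mul_const _).add ?_
    have hr : Tendsto (fun k => s - q k) atTop (𝓝[Icc 0 1] 0) := by
      refine tendsto_nhdsWithin_iff.2 ⟨by simpa using hq.const_sub s, ?_⟩
      exact Eventually.of_forall hu
    have hf₀ : f (0 * b) = 0 := by rw [zero_mul, hf.map_zero (hI.mem ⟨b, hb⟩)]
    rw [← hf₀]
    exact hc.tendsto.comp hr
  rw [add_zero] at hlim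
  exact tendsto_nhds_unique (tendsto_const_nhds.congr hsplit) hlim

theorem continuousWithinAt_comp_mul_zero_of_continuousWithinAt (hf : IsAdditiveOn f I)
    (hI : StarConvex ℝ 0 I) {a : ℝ} (ha : a ∈ I) (hc : ContinuousWithinAt f I a) :
    ContinuousWithinAt (fun t => f (t * a)) (Icc 0 1) 0 := by
  have hmem {t : ℝ} (ht : t ∈ Icc (0 : ℝ) 1) : (1 - t) * a ∈ I :=
    hI.mul_mem ha ⟨sub_nonneg.2 ht.2, by linarith [ht.1]⟩
  have hsplit (t : ℝ) (ht : t ∈ Icc (0 : ℝ) 1) : f (t * a) = f a - f ((1 - t) * a) := by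
    have hsum : t * a + (1 - t) * a = a := by ring
    have := hf _ (hI.mul_mem ha ht) _ (hmem ht) (by rwa [hsum])
    rw [hsum] at this
    linarith
  have hcomp : ContinuousWithinAt (fun t => f a - f ((1 - t) * a)) (Icc 0 1) 0 :=
    continuousWithinAt_const.sub <| hc.comp_of_eq (by fun_prop) (fun t ht => hmem ht) (by ring)
  exact hcomp.congr hsplit (hsplit 0 ⟨le_rfl, zero_le_one⟩)

theorem eq_div_mul_of_abs_le (hf : IsAdditiveOn f I) (hI : StarConvex ℝ 0 I) {b : ℝ}
    (hb : b ∈ I) (hb₀ : b ≠ 0) (hfb : ∀ s ∈ Icc (0 : ℝ) 1, f (s * b) = s * f b)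
    {y : ℝ} (hy : y ∈ I) (hyb : |y| ≤ |b|) : f y = f b / b * y := by
  have hs : |y / b| ≤ 1 := by rw [abs_div]; exact div_le_one_of_le₀ hyb (abs_nonneg b)
  have hyb' : y / b * b = y := div_mul_cancel₀ y hb₀
  rcases le_total 0 (y / b) with hs₀ | hs₀
  · calc f y = f (y / b * b) := by rw [hyb']
      _ = f b / b * y := by rw [hfb _ ⟨hs₀, (le_abs_self _).trans hs⟩]; ring
  · have hs' : -(y / b) ∈ Icc (0 : ℝ) 1 := ⟨neg_nonneg.2 hs₀, (neg_le_abs _).trans hs⟩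
    have hny : -(y / b) * b = -y := by rw [neg_mul, hyb']
    have hny' : -y ∈ I := by rw [← hny]; exact hI.mul_mem hb hs'
    calc f y = -f (-(y / b) * b) := by
          rw [hny, hf.map_neg (hI.mem ⟨b, hb⟩) hy hny', neg_neg]
      _ = f b / b * y := by rw [hfb _ hs']; ring

theorem eq_mul_of_eq_mul_of_abs_le (hf : IsAdditiveOn f I) (hI : StarConvex ℝ 0 I) {r c : ℝ}
    (hr : 0 < r) (h : ∀ y ∈ I, |y| ≤ r → f y = c * y) {x : ℝ} (hx : x ∈ I) :
    f x = c * x := by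
  obtain ⟨n, hn⟩ := exists_nat_gt (|x| / r)
  have hn₀ : (0 : ℝ) < n := (div_nonneg (abs_nonneg x) hr.le).trans_lt hn
  have hnx : (n : ℝ) * (x / n) = x := mul_div_cancel₀ x hn₀.ne'
  have hy : x / n ∈ I := hI.div_mem hx (Nat.one_le_cast.2 (Nat.cast_pos.1 hn₀))
  have hyr : |x / n| ≤ r := by
    rw [abs_div, Nat.abs_cast, div_le_iff₀ hn₀]
    rw [div_lt_iff₀ hr] at hn
    linarith
  rw [← hnx, hf.map_natCast_mul hI n hy (by rwa [hnx]), h _ hy hyr]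
  ring

end IsAdditiveOn

theorem cauchy_interval_continuousAt_general (I : Set ℝ) (hI : I.OrdConnected)
    (h0 : (0 : ℝ) ∈ I) (f : ℝ → ℝ)
    (hadd : ∀ x ∈ I, ∀ x' ∈ I, x + x' ∈ I → f (x + x') = f x + f x')
    (hcont : ∃ a ∈ I, ContinuousWithinAt f I a) :
    ∃ c : ℝ, ∀ x ∈ I, f x = c * x := by
  have hf : IsAdditiveOn f I := hadd
  have hI₀ : StarConvex ℝ 0 I := hI.convex.starConvex h0
  by_cases hI_zero : I ⊆ {0}
  · exact ⟨0, fun x hx => by rw [hI_zero hx, hf.map_zero h0, mul_zero]⟩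
  obtain ⟨a, ha, hfa⟩ := hcont
  obtain ⟨b, hb, hb₀, hfb⟩ : ∃ b ∈ I, b ≠ 0 ∧
      ContinuousWithinAt (fun t => f (t * b)) (Icc 0 1) 0 := by
    rcases eq_or_ne a 0 with rfl | ha₀
    · obtain ⟨b, hb, hb₀⟩ := not_subset.1 hI_zero
      exact ⟨b, hb, hb₀,
        hfa.comp_of_eq (by fun_prop) (fun t ht => hI₀.mul_mem hb ht) (zero_mul b)⟩
    · exact ⟨a, ha, ha₀,
        hf.continuousWithinAt_comp_mul_zero_of_continuousWithinAt hI₀ ha hfa⟩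
  have hfb' (s : ℝ) (hs : s ∈ Icc (0 : ℝ) 1) : f (s * b) = s * f b :=
    hf.map_mul_of_continuousWithinAt hI₀ hb hfb hs
  exact ⟨f b / b, fun x hx => hf.eq_mul_of_eq_mul_of_abs_le hI₀ (abs_pos.2 hb₀)
    (fun y hy hyb => hf.eq_div_mul_of_abs_le hI₀ hb hb₀ hfb' hy hyb) hx⟩

/-- If `f : I → ℝ` solves the restricted Cauchy equation and is
continuous at a point of `I`, then `f(x) = c·x` on `I`. -/
theorem cauchy_interval_continuousAt (I : Set ℝ) (hI : I.OrdConnected)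
    (h0 : (0 : ℝ) ∈ I) (hnt : ∃ x ∈ I, x ≠ 0) (f : ℝ → ℝ)
    (hadd : ∀ x ∈ I, ∀ x' ∈ I, x + x' ∈ I → f (x + x') = f x + f x')
    (hcont : ∃ a ∈ I, ContinuousWithinAt f I a) :
    ∃ c : ℝ, ∀ x ∈ I, f x = c * x :=
  cauchy_interval_continuousAt_general I hI h0 f hadd hcont
end

section
/- Let J be a nontrivial real interval containing 0 and let I = J + J = {x + y : x, y ∈ J}. If f : I → ℝ satisfies f(x+x') = f(x) + f(x') for all x, x' ∈ J, then f extends uniquely to an additive function g : ℝ → ℝ (i.e., g(x+y) = g(x)+g(y) for all x, y ∈ ℝ and g restricted to I equals f). -/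
/-!
Pick `[c - ε, c + ε] ⊆ J` with `ε > 0`. On `[-ε, ε]` the shift
`φ t = f (t + 2c) - f (2c) = f (t + c) - f c` satisfies the Cauchy equation (because
`x + y + 2c = (x + c) + (y + c)`) and agrees with `f` on `J ∩ [-ε, ε]`. A function satisfying the
Cauchy equation on `[-ε, ε]` extends additively to `ℝ` by `x ↦ n • φ (x / n)`, for any `n` with
`x / n ∈ [-ε, ε]`. On an interval containing `0`, a solution `h` of the Cauchy equation is
determined by its values near `0`, since `h x = n • h (x / n)`; applied to `f - g` this shows that
the extension `g` agrees with `f` on `J`, and applied to two extensions it gives uniqueness.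
-/

open Set Filter

def AdditiveOn {G : Type*} [AddCommGroup G] (f : ℝ → G) (S : Set ℝ) : Prop :=
  ∀ x ∈ S, ∀ y ∈ S, f (x + y) = f x + f y

theorem Set.OrdConnected.natCast_mul_div_mem {S : Set ℝ} (hS : S.OrdConnected) (h0 : (0 : ℝ) ∈ S)
    {x : ℝ} (hx : x ∈ S) {k n : ℕ} (hk : k ≤ n) : (k : ℝ) * (x / n) ∈ S := by
  have hkn : (k : ℝ) / n ∈ Icc 0 1 :=
    ⟨by positivity, div_le_one_of_le₀ (Nat.cast_le.2 hk) n.cast_nonneg⟩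
  rw [show (k : ℝ) * (x / n) = ((k : ℝ) / n) • x by rw [smul_eq_mul]; ring]
  exact hS.convex.smul_mem_of_zero_mem h0 hx hkn

theorem eventually_div_mem_Icc (x : ℝ) {ε : ℝ} (hε : 0 < ε) :
    ∀ᶠ n : ℕ in atTop, n ≠ 0 ∧ x / n ∈ Icc (-ε) ε :=
  (eventually_ne_atTop 0).and <|
    (tendsto_const_div_atTop_nhds_zero_nat x).eventually (Icc_mem_nhds (neg_lt_zero.2 hε) hε)

namespace AdditiveOn

variable {G : Type*} [AddCommGroup G] {f g : ℝ → G} {S : Set ℝ}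

theorem sub (hf : AdditiveOn f S) (hg : AdditiveOn g S) : AdditiveOn (f - g) S := by
  intro x hx y hy
  simp only [Pi.sub_apply, hf x hx y hy, hg x hx y hy]
  abel

theorem map_zero (hf : AdditiveOn f S) (h0 : (0 : ℝ) ∈ S) : f 0 = 0 := by
  simpa using hf 0 h0 0 h0

theorem map_natCast_mul (hf : AdditiveOn f S) {n : ℕ} {t : ℝ}
    (ht : ∀ k ≤ n, (k : ℝ) * t ∈ S) : f (n * t) = n • f t := by
  induction n with
  | zero => simpa using hf.map_zero (by simpa using ht 0 le_rfl)
  | succ n ih =>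
    have htS : t ∈ S := by simpa using ht 1 (by omega)
    rw [Nat.cast_succ, add_mul, one_mul, hf _ (ht n n.le_succ) _ htS,
      ih fun k hk => ht k (hk.trans n.le_succ), succ_nsmul]

theorem map_eq_nsmul_map_div (hf : AdditiveOn f S) (hS : S.OrdConnected) (h0 : (0 : ℝ) ∈ S)
    {x : ℝ} (hx : x ∈ S) {n : ℕ} (hn : n ≠ 0) : f x = n • f (x / n) := by
  rw [← hf.map_natCast_mul fun k hk => hS.natCast_mul_div_mem h0 hx hk,
    mul_div_cancel₀ _ (Nat.cast_ne_zero.2 hn)]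

theorem nsmul_map_div_eq (hf : AdditiveOn f S) (hS : S.OrdConnected) (h0 : (0 : ℝ) ∈ S)
    {x : ℝ} {m n : ℕ} (hm : m ≠ 0) (hn : n ≠ 0) (hxm : x / m ∈ S) (hxn : x / n ∈ S) :
    m • f (x / m) = n • f (x / n) := by
  rw [hf.map_eq_nsmul_map_div hS h0 hxm hn, hf.map_eq_nsmul_map_div hS h0 hxn hm, div_div,
    div_div, mul_comm (m : ℝ), smul_smul, smul_smul, mul_comm m]

theorem eqOn_zero_of_eqOn_zero_Icc (hf : AdditiveOn f S) (hS : S.OrdConnected)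
    (h0 : (0 : ℝ) ∈ S) {ε : ℝ} (hε : 0 < ε) (hz : EqOn f 0 (S ∩ Icc (-ε) ε)) : EqOn f 0 S := by
  intro x hx
  obtain ⟨n, hn, hxn⟩ := (eventually_div_mem_Icc x hε).exists
  have hxnS : x / n ∈ S := by
    simpa using hS.natCast_mul_div_mem h0 hx (Nat.one_le_iff_ne_zero.2 hn)
  simp only [hf.map_eq_nsmul_map_div hS h0 hx hn, hz ⟨hxnS, hxn⟩, Pi.zero_apply, smul_zero]

theorem exists_additive_extension {φ : ℝ → G} {ε : ℝ} (hε : 0 < ε)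
    (hφ : AdditiveOn φ (Icc (-ε) ε)) :
    ∃ g : ℝ → G, (∀ x y, g (x + y) = g x + g y) ∧ EqOn g φ (Icc (-ε) ε) := by
  have h0 : (0 : ℝ) ∈ Icc (-ε) ε := ⟨by linarith, hε.le⟩
  choose N hN using fun x => (eventually_div_mem_Icc x hε).exists
  have hg : ∀ (x : ℝ) {n : ℕ}, n ≠ 0 → x / n ∈ Icc (-ε) ε → N x • φ (x / N x) = n • φ (x / n) :=
    fun x n hn hxn => hφ.nsmul_map_div_eq ordConnected_Icc h0 (hN x).1 hn (hN x).2 hxn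
  refine ⟨fun x => N x • φ (x / N x), fun x y => ?_, fun x hx => ?_⟩
  · obtain ⟨n, ⟨⟨hn, hxyn⟩, -, hxn⟩, -, hyn⟩ := ((eventually_div_mem_Icc (x + y) hε).and
      (eventually_div_mem_Icc x hε)).and (eventually_div_mem_Icc y hε) |>.exists
    beta_reduce
    rw [hg _ hn hxyn, hg x hn hxn, hg y hn hyn, add_div, hφ _ hxn _ hyn, smul_add]
  · simpa using hg x one_ne_zero (by simpa using hx)

theorem exists_additiveOn_Icc_eqOn (hf : AdditiveOn f S) {c ε : ℝ} (hε : 0 ≤ ε)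
    (hS : Icc (c - ε) (c + ε) ⊆ S) :
    ∃ φ : ℝ → G, AdditiveOn φ (Icc (-ε) ε) ∧ EqOn φ f (S ∩ Icc (-ε) ε) := by
  have hc : ∀ t ∈ Icc (-ε) ε, t + c ∈ S := fun t ht =>
    hS ⟨by linarith [ht.1], by linarith [ht.2]⟩
  have hcS : c ∈ S := hS ⟨by linarith, by linarith⟩
  have hshift : ∀ t ∈ Icc (-ε) ε, f (t + c + c) - f (c + c) = f (t + c) - f c := by
    intro t ht
    rw [hf _ (hc t ht) _ hcS, hf _ hcS _ hcS]
    abel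
  refine ⟨fun t => f (t + c + c) - f (c + c), fun x hx y hy => ?_, fun t ht => ?_⟩
  · beta_reduce
    rw [hshift x hx, hshift y hy, show x + y + c + c = (x + c) + (y + c) by ring,
      hf _ (hc x hx) _ (hc y hy), hf _ hcS _ hcS]
    abel
  · beta_reduce
    rw [hshift t ht.2, hf _ ht.1 _ hcS, add_sub_cancel_right]

end AdditiveOn

theorem eq_zero_of_additive_of_eqOn_zero {G : Type*} [AddCommGroup G] {d : ℝ → G}
    (hd : ∀ x y, d (x + y) = d x + d y) {c ε : ℝ} (hε : 0 < ε)
    (hz : EqOn d 0 (Icc (c - ε) (c + ε))) : d = 0 := by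
  have hd' : AdditiveOn d univ := fun x _ y _ => hd x y
  refine funext fun x => hd'.eqOn_zero_of_eqOn_zero_Icc ordConnected_univ trivial hε
    (fun t ht => ?_) (mem_univ x)
  have htc : t + c ∈ Icc (c - ε) (c + ε) := ⟨by linarith [ht.2.1], by linarith [ht.2.2]⟩
  have hc : c ∈ Icc (c - ε) (c + ε) := ⟨by linarith, by linarith⟩
  calc d t = d (t + c) - d c := eq_sub_of_add_eq (hd t c).symm
    _ = 0 := by simp [hz htc, hz hc]

/-- If `f` satisfies the Cauchy equation for arguments in a
nontrivial interval `J` containing `0`, then `f` extends uniquely from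
`I = J + J` to an additive function on `ℝ`. -/
theorem cauchy_unique_additive_extension (J : Set ℝ) (hJ : J.OrdConnected)
    (h0 : (0 : ℝ) ∈ J) (hnt : ∃ a ∈ J, ∃ b ∈ J, a < b)
    (I : Set ℝ) (hIdef : I = {z : ℝ | ∃ x ∈ J, ∃ y ∈ J, z = x + y})
    (f : ℝ → ℝ) (hadd : ∀ x ∈ J, ∀ y ∈ J, f (x + y) = f x + f y) :
    ∃! g : ℝ → ℝ, (∀ x y : ℝ, g (x + y) = g x + g y) ∧ ∀ z ∈ I, g z = f z := by
  obtain ⟨a, haJ, b, hbJ, hab⟩ := hnt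
  obtain ⟨c, ε, hε, hcε⟩ : ∃ c ε : ℝ, 0 < ε ∧ Icc (c - ε) (c + ε) ⊆ J :=
    ⟨(a + b) / 2, (b - a) / 2, by linarith, by convert hJ.out haJ hbJ using 2 <;> ring⟩
  have hf : AdditiveOn f J := hadd
  have eqOn_I : ∀ g : ℝ → ℝ, (∀ x y, g (x + y) = g x + g y) → EqOn g f J →
      ∀ z ∈ I, g z = f z := by
    rintro g hg hgf z hz
    obtain ⟨x, hx, y, hy, rfl⟩ := hIdef ▸ hz
    rw [hg, hgf hx, hgf hy, hadd x hx y hy]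
  obtain ⟨φ, hφ, hφf⟩ := hf.exists_additiveOn_Icc_eqOn hε.le hcε
  obtain ⟨g, hg, hgφ⟩ := AdditiveOn.exists_additive_extension hε hφ
  have hgf : EqOn g f J := fun x hx => sub_eq_zero.1 <|
    (AdditiveOn.sub (fun x _ y _ => hg x y) hf).eqOn_zero_of_eqOn_zero_Icc hJ h0 hε
      (fun t ht => by simp [hgφ ht.2, hφf ht]) hx
  refine ⟨g, ⟨hg, eqOn_I g hg hgf⟩, fun g' ⟨hg', hg'f⟩ => ?_⟩
  have hJI : J ⊆ I := fun x hx => hIdef ▸ ⟨x, hx, 0, h0, (add_zero x).symm⟩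
  refine sub_eq_zero.1 <|
    eq_zero_of_additive_of_eqOn_zero (c := c) (fun x y => ?_) hε fun x hx => ?_
  · simp only [Pi.sub_apply, hg, hg']
    abel
  · have hxJ := hcε hx
    simp [hg'f x (hJI hxJ), hgf hxJ]
end

section
/- If I is a real interval centered at 0 and f : Iⁿ → ℝ is horizontally min-additive, then the diagonal section δ_f(x) = f(x,...,x) is additive on I (δ_f(x+x') = δ_f(x)+δ_f(x') whenever x, x', x+x' ∈ I) and odd (δ_f(-x) = -δ_f(x) for all x ∈ I). -/
/-- `f` is horizontally min-additive on `Iⁿ`. -/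
def HorizMinAdd {n : ℕ} (I : Set ℝ) (f : (Fin n → ℝ) → ℝ) : Prop :=
  ∀ x : Fin n → ℝ, (∀ i, x i ∈ I) → ∀ c ∈ I, (∀ i, x i - min (x i) c ∈ I) →
    f x = f (fun i => min (x i) c) + f (fun i => x i - min (x i) c)

/-- if `I` is centered at `0` and `f` is horizontally min-additive,
then the diagonal section `δ_f` is additive on `I` and odd. -/
theorem horizMinAdd_diag_additive_odd {n : ℕ} (I : Set ℝ)
    (hI : I.OrdConnected) (h0 : (0 : ℝ) ∈ I) (hnt : ∃ x ∈ I, x ≠ 0)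
    (hsym : ∀ x ∈ I, -x ∈ I)
    (f : (Fin n → ℝ) → ℝ) (hf : HorizMinAdd I f) :
    (∀ x ∈ I, ∀ x' ∈ I, x + x' ∈ I →
        f (fun _ => x + x') = f (fun _ => x) + f (fun _ => x')) ∧
      (∀ x ∈ I, f (fun _ => -x) = - f (fun _ => x)) := by
  -- δ 0 = 0
  have hzero : f (fun _ => (0:ℝ)) = 0 := by
    have := hf (fun _ => 0) (fun _ => h0) 0 h0 (by simpa using fun _ => h0)
    simp at this
    linarith
  -- additivity when the second summand is nonneg
  have hadd₁ : ∀ x ∈ I, ∀ x' ∈ I, x + x' ∈ I → 0 ≤ x' →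
      f (fun _ => x + x') = f (fun _ => x) + f (fun _ => x') := by
    intro x hx x' hx' hxx' hx'0
    have hmin : min (x + x') x = x := min_eq_right (le_add_of_nonneg_right hx'0)
    have := hf (fun _ => x + x') (fun _ => hxx') x hx
      (by intro i; simp only [hmin]; simpa using hx')
    simpa [hmin] using this
  -- oddness
  have hodd : ∀ x ∈ I, f (fun _ => -x) = - f (fun _ => x) := by
    have key : ∀ x ∈ I, 0 ≤ x → f (fun _ => -x) = - f (fun _ => x) := by
      intro x hx hx0
      have hmin : min (0:ℝ) (-x) = -x := min_eq_right (by linarith)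
      have := hf (fun _ => 0) (fun _ => h0) (-x) (hsym x hx)
        (by intro i; simp only [hmin]; simpa using hx)
      simp only [hmin, hzero, sub_neg_eq_add, zero_add] at this
      linarith
    intro x hx
    rcases le_or_gt 0 x with h | h
    · exact key x hx h
    · have := key (-x) (hsym x hx) (by linarith)
      simp only [neg_neg] at this
      linarith
  refine ⟨?_, hodd⟩
  intro x hx x' hx' hxx'
  rcases le_or_gt 0 x' with h | h
  · exact hadd₁ x hx x' hx' hxx' h
  rcases le_or_gt 0 x with h2 | h2
  · have := hadd₁ x' hx' x hx (by rwa [add_comm]) h2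
    rw [add_comm] at this
    linarith
  · -- both negative: use oddness
    have h1 := hadd₁ (-x) (hsym x hx) (-x') (hsym x' hx')
      (by rw [← neg_add]; exact hsym _ hxx') (by linarith)
    rw [← neg_add] at h1
    have e1 := hodd (x + x') hxx'
    have e2 := hodd x hx
    have e3 := hodd x' hx'
    linarith
end

section
/- Suppose I = ℝ or I is an interval with 0 ∈ I ⊆ [0,∞). A function f : Iⁿ → ℝ is horizontally min-additive if and only if the maps δ_f (diagonal section) and δ_f^A restricted to I ∩ [0,∞) (for each A ⊆ [n]) are additive, and for every permutation σ and every x with x_{σ(1)} ≤ ... ≤ x_{σ(n)} one has f(x) = δ_f(x_{σ(1)}) + Σ_{i=2}^n δ_f^{A_σ↑(i)}(x_{σ(i)} - x_{σ(i-1)}), where A_σ↑(i) = {σ(i),...,σ(n)}. -/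
/-- The section `δ_f^A(t) = f(t·1_A)`. -/
def deltaA {n : ℕ} (f : (Fin n → ℝ) → ℝ) (A : Finset (Fin n)) (t : ℝ) : ℝ :=
  f (fun i => if i ∈ A then t else 0)

open Finset

lemma sub_mem_of_ordConnected {I : Set ℝ} (hI : I.OrdConnected) (h0 : (0 : ℝ) ∈ I)
    (hcase : I = Set.univ ∨ I ⊆ Set.Ici 0) : ∀ a ∈ I, ∀ b ∈ I, b ≤ a → a - b ∈ I := by
  intro a ha b hb hba
  rcases hcase with rfl | hpos
  · trivial
  · exact hI.out h0 ha ⟨sub_nonneg.2 hba, sub_le_self a (hpos hb)⟩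

lemma monotone_sub_min (c : ℝ) : Monotone fun t : ℝ => t - min t c := by
  intro a b hab
  simp only [min_def]
  split_ifs <;> linarith

lemma sub_min_sub_min_sub (y : ℝ) {t s : ℝ} (hts : t ≤ s) :
    y - min y t - min (y - min y t) (s - t) = y - min y s := by
  simp only [min_def]
  split_ifs <;> linarith

lemma min_sub_min_of_le {y t s : ℝ} (hsy : s ≤ y) (hts : t ≤ s) :
    min (y - min y t) (s - t) = s - t := by
  simp only [min_def]
  split_ifs <;> linarith

lemma min_sub_min_of_ge {y t s : ℝ} (hyt : y ≤ t) (hts : t ≤ s) :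
    min (y - min y t) (s - t) = 0 := by
  simp only [min_def]
  split_ifs <;> linarith

/-- The right-hand side of the decomposition, with 0-based indices: `σ i` is the paper's
`σ(i+1)` and `image σ (Ici i)` is `A_σ↑(i+1)`. -/
def levelSum {n : ℕ} [NeZero n] (f : (Fin n → ℝ) → ℝ) (σ : Equiv.Perm (Fin n))
    (x : Fin n → ℝ) : ℝ :=
  f (fun _ => x (σ 0)) +
    ∑ i ∈ univ.erase (0 : Fin n), deltaA f (image σ (Ici i)) (x (σ i) - x (σ (i - 1)))

lemma mem_image_perm_Ici {α : Type*} [Preorder α] [LocallyFiniteOrderTop α] [DecidableEq α]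
    (σ : Equiv.Perm α) {i j : α} :
    j ∈ image σ (Ici i) ↔ i ≤ σ.symm j := by
  simp [Finset.mem_image, ← Equiv.eq_symm_apply]

lemma Fin.sub_one_le_of_ne_zero {n : ℕ} [NeZero n] {i : Fin n} (hi : i ≠ 0) : i - 1 ≤ i := by
  rw [Fin.le_def, Fin.val_sub_one_of_ne_zero hi]
  omega

namespace HorizMinAdd

variable {n : ℕ} {I : Set ℝ} {f : (Fin n → ℝ) → ℝ}

lemma map_zero (hf : HorizMinAdd I f) (h0 : (0 : ℝ) ∈ I) : f (fun _ => 0) = 0 := by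
  have h := hf (fun _ => 0) (fun _ => h0) 0 h0 (fun _ => by simpa using h0)
  simp only [min_self, sub_self] at h
  linarith

lemma eq_add_min (hf : HorizMinAdd I f) (hsub : ∀ a ∈ I, ∀ b ∈ I, b ≤ a → a - b ∈ I)
    {x : Fin n → ℝ} (hx : ∀ i, x i ∈ I) {c : ℝ} (hc : c ∈ I) :
    f x = f (fun i => min (x i) c) + f (fun i => x i - min (x i) c) :=
  hf x hx c hc fun i => hsub _ (hx i) _ (min_rec' (· ∈ I) (hx i) hc) (min_le_left _ _)

lemma diag_add_of_nonneg (hf : HorizMinAdd I f) {a b : ℝ} (ha : a ∈ I) (hb : b ∈ I)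
    (hab : a + b ∈ I) (hb0 : 0 ≤ b) :
    f (fun _ => a + b) = f (fun _ => a) + f (fun _ => b) := by
  have hmin : min (a + b) a = a := min_eq_right (le_add_of_nonneg_right hb0)
  simpa only [hmin, add_sub_cancel_left] using
    hf (fun _ => a + b) (fun _ => hab) a ha (fun _ => by simpa only [hmin, add_sub_cancel_left])

lemma diag_add (hf : HorizMinAdd I f) (hsub : ∀ a ∈ I, ∀ b ∈ I, b ≤ a → a - b ∈ I)
    (h0 : (0 : ℝ) ∈ I) :
    ∀ a ∈ I, ∀ b ∈ I, a + b ∈ I → f (fun _ => a + b) = f (fun _ => a) + f (fun _ => b) := by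
  intro a ha b hb hab
  rcases le_or_gt 0 b with hb0 | hb0
  · exact hf.diag_add_of_nonneg ha hb hab hb0
  -- `a = (a + b) + (-b)` and `0 = b + (-b)` are splittings with a nonnegative summand.
  have hnb : -b ∈ I := by simpa using hsub 0 h0 b hb hb0.le
  have ha' := hf.diag_add_of_nonneg hab hnb (by rwa [add_neg_cancel_right]) (by linarith)
  have h0' := hf.diag_add_of_nonneg hb hnb (by rwa [add_neg_cancel]) (by linarith)
  rw [add_neg_cancel_right] at ha'
  rw [add_neg_cancel, hf.map_zero h0] at h0'
  linarith

lemma deltaA_add (hf : HorizMinAdd I f) (h0 : (0 : ℝ) ∈ I) :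
    ∀ A : Finset (Fin n), ∀ a ∈ I ∩ Set.Ici 0, ∀ b ∈ I ∩ Set.Ici 0, a + b ∈ I ∩ Set.Ici 0 →
      deltaA f A (a + b) = deltaA f A a + deltaA f A b := by
  rintro A a ⟨ha, ha0⟩ b ⟨hb, hb0⟩ ⟨hab, -⟩
  have hmin : min (a + b) a = a := min_eq_right (le_add_of_nonneg_right hb0)
  have hmin0 : min 0 a = 0 := min_eq_left ha0
  have h := hf (fun i => if i ∈ A then a + b else 0) (fun i => by split_ifs <;> assumption) a ha
    (fun i => by split_ifs <;> simpa only [hmin, hmin0, add_sub_cancel_left, sub_self])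
  unfold deltaA
  convert h using 3 <;> funext i <;> split_ifs <;>
    simp only [hmin, hmin0, add_sub_cancel_left, sub_self]

lemma residual_eq_sum {m : ℕ} {f : (Fin (m + 1) → ℝ) → ℝ} (hf : HorizMinAdd I f)
    (hsub : ∀ a ∈ I, ∀ b ∈ I, b ≤ a → a - b ∈ I) (h0 : (0 : ℝ) ∈ I)
    {σ : Equiv.Perm (Fin (m + 1))} {x : Fin (m + 1) → ℝ} (hx : ∀ i, x i ∈ I)
    (hmono : Monotone (x ∘ σ)) (k : Fin (m + 1)) :
    f (fun j => x j - min (x j) (x (σ k))) =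
      ∑ i ∈ Ioi k, deltaA f (image σ (Ici i)) (x (σ i) - x (σ (i - 1))) := by
  have hle : ∀ {k j}, k ≤ σ.symm j → x (σ k) ≤ x j := fun h => by simpa using hmono h
  have hge : ∀ {k j}, σ.symm j ≤ k → x j ≤ x (σ k) := fun h => by simpa using hmono h
  induction k using Fin.reverseInduction with
  | last =>
    have hzero : (fun j => x j - min (x j) (x (σ (Fin.last m)))) = fun _ => 0 :=
      funext fun j => by rw [min_eq_left (hge (Fin.le_last _)), sub_self]
    rw [hzero, hf.map_zero h0]
    simp [← Fin.top_eq_last]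
  | cast i ih =>
    set t := x (σ i.castSucc)
    set s := x (σ i.succ)
    have hts : t ≤ s := hmono (Fin.castSucc_le_succ i)
    have hslab : (fun j => min (x j - min (x j) t) (s - t)) =
        fun j => if j ∈ image σ (Ici i.succ) then s - t else 0 := by
      funext j
      split_ifs with hj <;> rw [mem_image_perm_Ici] at hj
      · exact min_sub_min_of_le (hle hj) hts
      · exact min_sub_min_of_ge (hge (Fin.le_castSucc_iff.2 (not_le.1 hj))) hts
    have hres : ∀ j, x j - min (x j) t ∈ I := fun j =>
      hsub _ (hx j) _ (min_rec' (· ∈ I) (hx j) (hx _)) (min_le_left _ _)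
    have hcut := hf.eq_add_min (c := s - t) hsub hres (hsub _ (hx _) _ (hx _) hts)
    simp only [hslab, sub_min_sub_min_sub _ hts] at hcut
    have hIoi : Ioi i.castSucc = insert i.succ (Ioi i.succ) := by
      rw [Ioi_insert]
      ext j
      simp [Fin.castSucc_lt_iff_succ_le]
    have hpred : i.succ - 1 = i.castSucc := by
      ext
      simp [Fin.val_sub_one_of_ne_zero]
    rw [hcut, ih, hIoi, sum_insert notMem_Ioi_self, hpred]
    rfl

lemma eq_levelSum [NeZero n] (hf : HorizMinAdd I f)
    (hsub : ∀ a ∈ I, ∀ b ∈ I, b ≤ a → a - b ∈ I) (h0 : (0 : ℝ) ∈ I)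
    {σ : Equiv.Perm (Fin n)} {x : Fin n → ℝ} (hx : ∀ i, x i ∈ I) (hmono : Monotone (x ∘ σ)) :
    f x = levelSum f σ x := by
  obtain ⟨m, rfl⟩ := Nat.exists_eq_succ_of_ne_zero (NeZero.ne n)
  have hmin : (fun j => min (x j) (x (σ 0))) = fun _ => x (σ 0) :=
    funext fun j => min_eq_right (by simpa using hmono (Fin.zero_le (σ.symm j)))
  have hIoi : Ioi (0 : Fin (m + 1)) = univ.erase 0 := by
    ext
    simp
  rw [hf.eq_add_min hsub hx (hx (σ 0)), hmin, hf.residual_eq_sum hsub h0 hx hmono, hIoi]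
  rfl

end HorizMinAdd

section Converse

variable {n : ℕ} [NeZero n] {I : Set ℝ} {f : (Fin n → ℝ) → ℝ}

lemma levelSum_add (hsub : ∀ a ∈ I, ∀ b ∈ I, b ≤ a → a - b ∈ I)
    (hdiag : ∀ a ∈ I, ∀ b ∈ I, a + b ∈ I →
      f (fun _ => a + b) = f (fun _ => a) + f (fun _ => b))
    (hdelta : ∀ A : Finset (Fin n), ∀ a ∈ I ∩ Set.Ici 0, ∀ b ∈ I ∩ Set.Ici 0,
      a + b ∈ I ∩ Set.Ici 0 → deltaA f A (a + b) = deltaA f A a + deltaA f A b)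
    {σ : Equiv.Perm (Fin n)} {x y : Fin n → ℝ} (hx : ∀ i, x i ∈ I) (hy : ∀ i, y i ∈ I)
    (hxy : ∀ i, x i + y i ∈ I) (hxm : Monotone (x ∘ σ)) (hym : Monotone (y ∘ σ)) :
    levelSum f σ (x + y) = levelSum f σ x + levelSum f σ y := by
  have hstep : ∀ z : Fin n → ℝ, (∀ i, z i ∈ I) → Monotone (z ∘ σ) → ∀ i ≠ 0,
      z (σ i) - z (σ (i - 1)) ∈ I ∩ Set.Ici 0 := fun z hz hzm i hi =>
    have hle : z (σ (i - 1)) ≤ z (σ i) := hzm (Fin.sub_one_le_of_ne_zero hi)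
    ⟨hsub _ (hz _) _ (hz _) hle, sub_nonneg.2 hle⟩
  have hsum : ∀ i ∈ univ.erase (0 : Fin n),
      deltaA f (image σ (Ici i)) ((x + y) (σ i) - (x + y) (σ (i - 1))) =
        deltaA f (image σ (Ici i)) (x (σ i) - x (σ (i - 1))) +
          deltaA f (image σ (Ici i)) (y (σ i) - y (σ (i - 1))) := by
    intro i hi
    have hi := ne_of_mem_erase hi
    have hsplit : (x + y) (σ i) - (x + y) (σ (i - 1)) =
        (x (σ i) - x (σ (i - 1))) + (y (σ i) - y (σ (i - 1))) := by
      simp only [Pi.add_apply]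
      ring
    rw [hsplit]
    exact hdelta _ _ (hstep x hx hxm i hi) _ (hstep y hy hym i hi)
      (hsplit ▸ hstep (x + y) hxy (hxm.add hym) i hi)
  unfold levelSum
  rw [Pi.add_apply, hdiag _ (hx _) _ (hy _) (hxy _), sum_congr rfl hsum, sum_add_distrib]
  ring

lemma horizMinAdd_of_eq_levelSum (hsub : ∀ a ∈ I, ∀ b ∈ I, b ≤ a → a - b ∈ I)
    (hdiag : ∀ a ∈ I, ∀ b ∈ I, a + b ∈ I →
      f (fun _ => a + b) = f (fun _ => a) + f (fun _ => b))
    (hdelta : ∀ A : Finset (Fin n), ∀ a ∈ I ∩ Set.Ici 0, ∀ b ∈ I ∩ Set.Ici 0,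
      a + b ∈ I ∩ Set.Ici 0 → deltaA f A (a + b) = deltaA f A a + deltaA f A b)
    (hdec : ∀ (σ : Equiv.Perm (Fin n)) (x : Fin n → ℝ), (∀ i, x i ∈ I) →
      Monotone (x ∘ σ) → f x = levelSum f σ x) :
    HorizMinAdd I f := by
  intro x hx c hc hrem
  have hsort := Tuple.monotone_sort x
  have hmin : ∀ i, min (x i) c ∈ I := fun i => min_rec' (· ∈ I) (hx i) hc
  have hmin_mono := (monotone_id.min (monotone_const (c := c))).comp hsort
  have hrem_mono := (monotone_sub_min c).comp hsort
  have hsum : (fun i => min (x i) c) + (fun i => x i - min (x i) c) = x :=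
    funext fun i => add_sub_cancel _ _
  rw [hdec _ _ hmin hmin_mono, hdec _ _ hrem hrem_mono,
    ← levelSum_add hsub hdiag hdelta hmin hrem (by simpa using hx) hmin_mono hrem_mono, hsum]
  exact hdec _ x hx hsort

end Converse

theorem horizMinAdd_characterization_general (n : ℕ) [NeZero n] (I : Set ℝ)
    (hI : I.OrdConnected) (h0 : (0 : ℝ) ∈ I)
    (hcase : I = Set.univ ∨ I ⊆ Set.Ici 0)
    (f : (Fin n → ℝ) → ℝ) :
    HorizMinAdd I f ↔
      ((∀ x ∈ I, ∀ x' ∈ I, x + x' ∈ I →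
          f (fun _ => x + x') = f (fun _ => x) + f (fun _ => x')) ∧
        (∀ A : Finset (Fin n), ∀ x ∈ I ∩ Set.Ici 0, ∀ x' ∈ I ∩ Set.Ici 0,
          x + x' ∈ I ∩ Set.Ici 0 →
            deltaA f A (x + x') = deltaA f A x + deltaA f A x') ∧
        (∀ σ : Equiv.Perm (Fin n), ∀ x : Fin n → ℝ, (∀ i, x i ∈ I) →
          Monotone (x ∘ σ) →
            f x = f (fun _ => x (σ 0)) +
              ∑ i ∈ Finset.univ.erase (0 : Fin n),
                deltaA f (Finset.image σ (Finset.Ici i))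
                  (x (σ i) - x (σ (i - 1))))) := by
  have hsub := sub_mem_of_ordConnected hI h0 hcase
  exact ⟨fun hf => ⟨hf.diag_add hsub h0, hf.deltaA_add h0,
      fun σ x hx hmono => hf.eq_levelSum hsub h0 hx hmono⟩,
    fun ⟨hdiag, hdelta, hdec⟩ => horizMinAdd_of_eq_levelSum hsub hdiag hdelta hdec⟩

/-- characterization of horizontally min-additive functions when
`I = ℝ` or `0 ∈ I ⊆ [0,∞)`. -/
theorem horizMinAdd_characterization (n : ℕ) [NeZero n] (I : Set ℝ)
    (hI : I.OrdConnected) (h0 : (0 : ℝ) ∈ I) (hnt : ∃ x ∈ I, x ≠ 0)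
    (hcase : I = Set.univ ∨ I ⊆ Set.Ici 0)
    (f : (Fin n → ℝ) → ℝ) :
    HorizMinAdd I f ↔
      ((∀ x ∈ I, ∀ x' ∈ I, x + x' ∈ I →
          f (fun _ => x + x') = f (fun _ => x) + f (fun _ => x')) ∧
        (∀ A : Finset (Fin n), ∀ x ∈ I ∩ Set.Ici 0, ∀ x' ∈ I ∩ Set.Ici 0,
          x + x' ∈ I ∩ Set.Ici 0 →
            deltaA f A (x + x') = deltaA f A x + deltaA f A x') ∧
        (∀ σ : Equiv.Perm (Fin n), ∀ x : Fin n → ℝ, (∀ i, x i ∈ I) →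
          Monotone (x ∘ σ) →
            f x = f (fun _ => x (σ 0)) +
              ∑ i ∈ Finset.univ.erase (0 : Fin n),
                deltaA f (Finset.image σ (Finset.Ici i))
                  (x (σ i) - x (σ (i - 1))))) :=
  horizMinAdd_characterization_general n I hI h0 hcase f
end

section
/- Assume I = ℝ or 0 ∈ I ⊆ (-∞,0]. A function f : Iⁿ → ℝ is comonotonically additive if and only if it is horizontally max-additive, where horizontal max-additivity means f(x) = f(x ∨ c) + f(x - (x ∨ c)) for every x ∈ Iⁿ and c ∈ I with x - (x ∨ c) ∈ Iⁿ. -/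
/-- `f` is horizontally max-additive on `Iⁿ`. -/
def HorizMaxAdd {n : ℕ} (I : Set ℝ) (f : (Fin n → ℝ) → ℝ) : Prop :=
  ∀ x : Fin n → ℝ, (∀ i, x i ∈ I) → ∀ c ∈ I, (∀ i, x i - max (x i) c ∈ I) →
    f x = f (fun i => max (x i) c) + f (fun i => x i - max (x i) c)

/-- `x` and `y` are comonotonic `n`-tuples. -/
def Comonotone {n : ℕ} (x y : Fin n → ℝ) : Prop :=
  ∃ σ : Equiv.Perm (Fin n), Monotone (x ∘ σ) ∧ Monotone (y ∘ σ)

/-- `f` is comonotonically additive on `Iⁿ`. -/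
def ComonAdd {n : ℕ} (I : Set ℝ) (f : (Fin n → ℝ) → ℝ) : Prop :=
  ∀ x y : Fin n → ℝ, (∀ i, x i ∈ I) → (∀ i, y i ∈ I) → (∀ i, x i + y i ∈ I) →
    Comonotone x y → f (x + y) = f x + f y

/-! Sort `x` and `y` by a common permutation. For sorted tuples the maximum distributes over the
sum, so cutting `x + y` at the level `x j + y j` splits it into `(x ∨ x j) + (y ∨ y j)` and
`(x - x ∨ x j) + (y - y ∨ y j)`, and horizontal max-additivity reduces additivity on `(x, y)` to
additivity on these two pairs. Taking `j` the first index where `y` leaves its minimum, the upper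
`y` takes fewer values, while the lower `y` is a step `b • 1_{i < j}` with the lower `x` supported
under it, which a single cut at `b` splits. The induction on the number of values of `y` ends at
constant `y`: one cut when `I ⊆ (-∞, 0]`, a shift through an upper bound of `x` when `I = ℝ`. -/

open Finset

theorem max_add_add_max_of_le {α : Type*} [AddCommMonoid α] [LinearOrder α] [IsOrderedAddMonoid α]
    {a b c d : α} (h : (a ≤ c ∧ b ≤ d) ∨ (c ≤ a ∧ d ≤ b)) :
    max (a + b) (c + d) = max a c + max b d := by
  rcases h with ⟨hac, hbd⟩ | ⟨hca, hdb⟩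
  · rw [max_eq_right hac, max_eq_right hbd, max_eq_right (add_le_add hac hbd)]
  · rw [max_eq_left hca, max_eq_left hdb, max_eq_left (add_le_add hca hdb)]

theorem Monotone.max_add_max {ι α : Type*} [LinearOrder ι] [AddCommMonoid α] [LinearOrder α]
    [IsOrderedAddMonoid α] {x y : ι → α} (hx : Monotone x) (hy : Monotone y) (i j : ι) :
    max (x i + y i) (x j + y j) = max (x i) (x j) + max (y i) (y j) :=
  max_add_add_max_of_le <| (le_total i j).imp (fun h => ⟨hx h, hy h⟩) fun h => ⟨hx h, hy h⟩

theorem Monotone.sub_max_add_sub_max {ι α : Type*} [LinearOrder ι] [AddCommGroup α]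
    [LinearOrder α] [IsOrderedAddMonoid α] {x y : ι → α} (hx : Monotone x) (hy : Monotone y)
    (i j : ι) :
    x i - max (x i) (x j) + (y i - max (y i) (y j)) = x i + y i - max (x i + y i) (x j + y j) := by
  rw [hx.max_add_max hy]
  abel

theorem monotone_sub_max {α : Type*} [AddCommGroup α] [LinearOrder α] [IsOrderedAddMonoid α]
    (c : α) : Monotone fun t : α => t - max t c := by
  intro a b hab
  have := max_sub_max_le_max b c a c
  rw [sub_self, max_eq_left (sub_nonneg.2 hab)] at this
  simpa only [sub_le_sub_iff, add_comm] using this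

theorem card_image_max_lt {ι α : Type*} [Fintype ι] [LinearOrder α] (y : ι → α) {i₀ j : ι}
    (h : y i₀ < y j) : #(univ.image fun i => max (y i) (y j)) < #(univ.image y) := by
  refine card_lt_card <| (ssubset_iff_of_subset ?_).2 ⟨y i₀, mem_image_of_mem y (mem_univ _), ?_⟩
  · intro t ht
    obtain ⟨i, -, rfl⟩ := mem_image.1 ht
    exact max_rec' (· ∈ univ.image y) (mem_image_of_mem y (mem_univ i))
      (mem_image_of_mem y (mem_univ j))
  · simp only [mem_image, mem_univ, true_and, not_exists]
    exact fun i hi => (h.trans_le (le_max_right _ _)).ne' hi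

theorem sub_max_mem {I : Set ℝ} (hI : I.OrdConnected) (h0 : (0 : ℝ) ∈ I)
    (hcase : I = Set.univ ∨ I ⊆ Set.Iic 0) {a c : ℝ} (ha : a ∈ I) (hc : c ∈ I) :
    a - max a c ∈ I := by
  rcases hcase with rfl | hle
  · trivial
  · have hmax : max a c ≤ 0 := max_le (hle ha) (hle hc)
    exact hI.out ha h0 ⟨by linarith, by linarith [le_max_left a c]⟩

theorem ComonAdd.horizMaxAdd {n : ℕ} {I : Set ℝ} {f : (Fin n → ℝ) → ℝ} (hf : ComonAdd I f) :
    HorizMaxAdd I f := by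
  intro x hxI c hc hsubI
  have hcomon : Comonotone (fun i => max (x i) c) (fun i => x i - max (x i) c) :=
    ⟨Tuple.sort x, (monotone_id.max monotone_const).comp (Tuple.monotone_sort x),
      (monotone_sub_max c).comp (Tuple.monotone_sort x)⟩
  have := hf _ _ (fun i => max_rec' (· ∈ I) (hxI i) hc) hsubI
    (fun i => by simpa using hxI i) hcomon
  rwa [show ((fun i => max (x i) c) + fun i => x i - max (x i) c) = x by ext; simp] at this

namespace HorizMaxAdd

variable {n : ℕ} {I : Set ℝ} {f : (Fin n → ℝ) → ℝ}

theorem comp_perm (hf : HorizMaxAdd I f) (σ : Equiv.Perm (Fin n)) :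
    HorizMaxAdd I fun v => f (v ∘ σ) :=
  fun x hxI c hc hsubI => hf (x ∘ σ) (fun _ => hxI _) c hc fun _ => hsubI _

theorem map_add_of_max_eq (hf : HorizMaxAdd I f) {u v : Fin n → ℝ} {c : ℝ} (hc : c ∈ I)
    (huvI : ∀ i, u i + v i ∈ I) (hvI : ∀ i, v i ∈ I) (hmax : ∀ i, max (u i + v i) c = u i) :
    f (u + v) = f u + f v := by
  have hsub : ∀ i, u i + v i - max (u i + v i) c = v i := fun i => by rw [hmax]; ring
  have := hf (u + v) huvI c hc fun i => by simp only [Pi.add_apply, hsub, hvI]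
  rwa [show (fun i => max ((u + v) i) c) = u from funext hmax,
    show (fun i => (u + v) i - max ((u + v) i) c) = v from funext hsub] at this

theorem map_eq_const_add (hf : HorizMaxAdd I f) {z : Fin n → ℝ} {c : ℝ} (hzI : ∀ i, z i ∈ I)
    (hc : c ∈ I) (hsubI : ∀ i, z i - c ∈ I) (hzc : ∀ i, z i ≤ c) :
    f z = f (fun _ => c) + f fun i => z i - c := by
  have := hf z hzI c hc fun i => by rw [max_eq_right (hzc i)]; exact hsubI i
  simpa only [max_eq_right (hzc _)] using this

theorem map_indicator_add (hf : HorizMaxAdd I f) {S : Set (Fin n)} {b : ℝ} {u : Fin n → ℝ}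
    (hb : b ∈ I) (hb0 : b ≤ 0) (hu : ∀ i, u i ≤ 0) (hsupp : Function.support u ⊆ S)
    (huI : ∀ i, u i ∈ I) (hsumI : ∀ i, S.indicator (fun _ => b) i + u i ∈ I) :
    f (S.indicator (fun _ => b) + u) = f (S.indicator fun _ => b) + f u := by
  refine hf.map_add_of_max_eq hb hsumI huI fun i => ?_
  by_cases hi : i ∈ S
  · rw [Set.indicator_of_mem hi]
    exact max_eq_right (by linarith [hu i])
  · simp [hi, Function.notMem_support.1 (mt (@hsupp i) hi), hb0]

theorem map_const_add_const (hf : HorizMaxAdd Set.univ f) (a b : ℝ) :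
    f (fun _ => a + b) = f (fun _ => a) + f fun _ => b := by
  set c := max a (a + b)
  have h₁ := hf.map_eq_const_add (z := fun _ => a + b) (c := c) (fun _ => trivial) trivial
    (fun _ => trivial) fun _ => le_max_right _ _
  have h₂ := hf.map_eq_const_add (z := fun _ => a) (c := c) (fun _ => trivial) trivial
    (fun _ => trivial) fun _ => le_max_left _ _
  have h₃ := hf.map_eq_const_add (z := fun _ => a + b - c) (c := b) (fun _ => trivial) trivial
    (fun _ => trivial) fun _ => by linarith [le_max_left a (a + b)]
  rw [show a + b - c - b = a - c by ring] at h₃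
  linarith

theorem map_add_const_of_univ (hf : HorizMaxAdd Set.univ f) (x : Fin n → ℝ) (b : ℝ) :
    f (x + fun _ => b) = f x + f fun _ => b := by
  obtain ⟨M, hM⟩ := (Set.finite_range x).bddAbove
  have hxM : ∀ i, x i ≤ M := fun i => hM ⟨i, rfl⟩
  have h₁ := hf.map_eq_const_add (z := x + fun _ => b) (c := M + b) (fun _ => trivial) trivial
    (fun _ => trivial) fun i => add_le_add (hxM i) le_rfl
  have h₂ := hf.map_eq_const_add (z := x) (c := M) (fun _ => trivial) trivial
    (fun _ => trivial) hxM
  simp only [Pi.add_apply, add_sub_add_right_eq_sub] at h₁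
  rw [h₁, h₂, hf.map_const_add_const]
  ring

theorem map_add_const_of_subset_Iic (hf : HorizMaxAdd I f) (hle : I ⊆ Set.Iic 0)
    {x : Fin n → ℝ} (hxI : ∀ i, x i ∈ I) {b : ℝ} (hb : b ∈ I) (hxbI : ∀ i, x i + b ∈ I) :
    f (x + fun _ => b) = f x + f fun _ => b := by
  rw [add_comm, add_comm (f x)]
  refine hf.map_add_of_max_eq hb (fun i => by rw [add_comm]; exact hxbI i) hxI fun i => ?_
  exact max_eq_right (by linarith [Set.mem_Iic.1 (hle (hxI i))])

theorem map_add_const (hf : HorizMaxAdd I f) (hcase : I = Set.univ ∨ I ⊆ Set.Iic 0) :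
    ∀ x : Fin n → ℝ, (∀ i, x i ∈ I) → ∀ b ∈ I, (∀ i, x i + b ∈ I) →
      f (x + fun _ => b) = f x + f fun _ => b := by
  rcases hcase with rfl | hle
  · exact fun x _ b _ _ => hf.map_add_const_of_univ x b
  · exact fun x hxI b hb hxbI => hf.map_add_const_of_subset_Iic hle hxI hb hxbI

section Monotone

variable (hf : HorizMaxAdd I f) (hsub : ∀ a ∈ I, ∀ c ∈ I, a - max a c ∈ I) {x y : Fin n → ℝ}
  (hx : Monotone x) (hy : Monotone y) (hxI : ∀ i, x i ∈ I) (hyI : ∀ i, y i ∈ I)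
  (hxyI : ∀ i, x i + y i ∈ I)
include hf hsub hx hy hxI hyI hxyI

theorem map_add_of_split (j : Fin n)
    (hupper : f ((fun i => max (x i) (x j)) + fun i => max (y i) (y j)) =
      f (fun i => max (x i) (x j)) + f fun i => max (y i) (y j))
    (hlower : f ((fun i => x i - max (x i) (x j)) + fun i => y i - max (y i) (y j)) =
      f (fun i => x i - max (x i) (x j)) + f fun i => y i - max (y i) (y j)) :
    f (x + y) = f x + f y := by
  have hxy := hf (x + y) hxyI (x j + y j) (hxyI j) fun i => hsub _ (hxyI i) _ (hxyI j)
  have hx' := hf x hxI (x j) (hxI j) fun i => hsub _ (hxI i) _ (hxI j)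
  have hy' := hf y hyI (y j) (hyI j) fun i => hsub _ (hyI i) _ (hyI j)
  rw [show (fun i => max ((x + y) i) (x j + y j)) = (fun i => max (x i) (x j)) +
      fun i => max (y i) (y j) from funext fun i => hx.max_add_max hy i j,
    show (fun i => (x + y) i - max ((x + y) i) (x j + y j)) = (fun i => x i - max (x i) (x j)) +
      fun i => y i - max (y i) (y j) from funext fun i => (hx.sub_max_add_sub_max hy i j).symm]
    at hxy
  linarith

theorem map_add_sub_max_of_eq_on_Iio (j : Fin n) {b : ℝ} (hb : b ∈ I) (hbj : b ≤ y j)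
    (hyb : ∀ i < j, y i = b) :
    f ((fun i => x i - max (x i) (x j)) + fun i => y i - max (y i) (y j)) =
      f (fun i => x i - max (x i) (x j)) + f fun i => y i - max (y i) (y j) := by
  have hind : (fun i => y i - max (y i) (y j)) = (Set.Iio j).indicator fun _ => b - y j := by
    ext i
    rcases lt_or_ge i j with hij | hji
    · simp [hij, hyb i hij, hbj]
    · simp [not_lt.2 hji, hy hji]
  rw [hind, add_comm, add_comm (f _)]
  refine hf.map_indicator_add ?_ (sub_nonpos.2 hbj) (fun i => sub_nonpos.2 (le_max_left _ _)) ?_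
    (fun i => hsub _ (hxI i) _ (hxI j)) fun i => ?_
  · simpa [max_eq_right hbj] using hsub b hb (y j) (hyI j)
  · intro i hi
    by_contra hij
    exact hi (by simp [hx (not_lt.1 hij)])
  · rw [← hind, add_comm, hx.sub_max_add_sub_max hy]
    exact hsub _ (hxyI i) _ (hxyI j)

theorem map_add_of_monotone (h0 : (0 : ℝ) ∈ I)
    (hconst : ∀ z : Fin n → ℝ, (∀ i, z i ∈ I) → ∀ b ∈ I, (∀ i, z i + b ∈ I) →
      f (z + fun _ => b) = f z + f fun _ => b) :
    f (x + y) = f x + f y := by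
  induction hk : #(univ.image y) using Nat.strong_induction_on generalizing x y with
  | _ k ih =>
  rcases isEmpty_or_nonempty (Fin n) with hn | hn
  · rw [Subsingleton.elim y fun _ => 0]
    exact hconst x hxI 0 h0 isEmptyElim
  obtain ⟨i₀, hi₀⟩ := Finite.exists_min y
  by_cases hy_const : ∀ i, y i ≤ y i₀
  · have hy_eq : ∀ i, y i = y i₀ := fun i => (hy_const i).antisymm (hi₀ i)
    rw [show y = fun _ => y i₀ from funext hy_eq]
    exact hconst x hxI _ (hyI i₀) fun i => by rw [← hy_eq i]; exact hxyI i
  push Not at hy_const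
  obtain ⟨j, hj, hjmin⟩ := wellFounded_lt.has_min {i | y i₀ < y i} hy_const
  have hyj : ∀ i < j, y i = y i₀ := fun i hij =>
    (not_lt.1 fun h => hjmin i h hij).antisymm (hi₀ i)
  refine hf.map_add_of_split hsub hx hy hxI hyI hxyI j ?_
    (hf.map_add_sub_max_of_eq_on_Iio hsub hx hy hxI hyI hxyI j (hyI i₀) hj.le hyj)
  exact ih _ (hk ▸ card_image_max_lt y hj) (hx.max monotone_const) (hy.max monotone_const)
    (fun i => max_rec' (· ∈ I) (hxI i) (hxI j)) (fun i => max_rec' (· ∈ I) (hyI i) (hyI j))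
    (fun i => by rw [← hx.max_add_max hy]; exact max_rec' (· ∈ I) (hxyI i) (hxyI j)) rfl

end Monotone

end HorizMaxAdd

theorem comonAdd_iff_horizMaxAdd_general {n : ℕ} (I : Set ℝ) (hI : I.OrdConnected)
    (h0 : (0 : ℝ) ∈ I)
    (hcase : I = Set.univ ∨ I ⊆ Set.Iic 0)
    (f : (Fin n → ℝ) → ℝ) :
    ComonAdd I f ↔ HorizMaxAdd I f := by
  refine ⟨ComonAdd.horizMaxAdd, fun hf x y hxI hyI hxyI ⟨σ, hxσ, hyσ⟩ => ?_⟩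
  have hg := hf.comp_perm σ.symm
  have := hg.map_add_of_monotone (fun a ha c hc => sub_max_mem hI h0 hcase ha hc) hxσ hyσ
    (fun _ => hxI _) (fun _ => hyI _) (fun _ => hxyI _) h0 (hg.map_add_const hcase)
  simpa only [Pi.add_comp, Function.comp_assoc, Equiv.self_comp_symm, Function.comp_id] using this

/-- when `I = ℝ` or `0 ∈ I ⊆ (-∞,0]`, comonotonic additivity is
equivalent to horizontal max-additivity. -/
theorem comonAdd_iff_horizMaxAdd {n : ℕ} (I : Set ℝ) (hI : I.OrdConnected)
    (h0 : (0 : ℝ) ∈ I) (hnt : ∃ x ∈ I, x ≠ 0)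
    (hcase : I = Set.univ ∨ I ⊆ Set.Iic 0)
    (f : (Fin n → ℝ) → ℝ) :
    ComonAdd I f ↔ HorizMaxAdd I f :=
  comonAdd_iff_horizMaxAdd_general I hI h0 hcase f
end

section
/- Every Lovász extension f : ℝⁿ → ℝ with f(0) = 0 is comonotonically additive. -/
/-- A Lovász extension: its restriction to each cone
`ℝⁿ_σ = {x : x_{σ(1)} ≤ … ≤ x_{σ(n)}}` is affine. -/
def IsLovasz {n : ℕ} (f : (Fin n → ℝ) → ℝ) : Prop :=
  ∀ σ : Equiv.Perm (Fin n), ∃ (a : Fin n → ℝ) (b : ℝ),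
    ∀ x : Fin n → ℝ, Monotone (x ∘ σ) → f x = (∑ i, a i * x i) + b

/-- every Lovász extension vanishing at the origin is
comonotonically additive. -/
theorem lovasz_comonAdd {n : ℕ} (f : (Fin n → ℝ) → ℝ) (hf : IsLovasz f)
    (h0 : f (fun _ => 0) = 0) :
    ∀ x y : Fin n → ℝ, Comonotone x y → f (x + y) = f x + f y := by
  rintro x y ⟨σ, hx, hy⟩
  obtain ⟨a, b, hab⟩ := hf σ
  have hb : b = 0 := by
    have h := hab (fun _ => 0) (by intro i j _; simp)
    simpa [h0] using h.symm
  have hxy : Monotone ((x + y) ∘ σ) := by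
    intro i j hij
    exact add_le_add (hx hij) (hy hij)
  rw [hab _ hxy, hab _ hx, hab _ hy, hb]
  simp [Pi.add_apply, mul_add, Finset.sum_add_distrib]
end

section
/- A function f : ℝⁿ → ℝ with f(0)=0 is a Lovász extension if and only if f is horizontally min-additive and positively homogeneous of degree one. -/
open Finset

section

variable {ι : Type*} {f : (ι → ℝ) → ℝ}

def IsHorizMinAdditive (f : (ι → ℝ) → ℝ) : Prop :=
  ∀ (x : ι → ℝ) (c : ℝ), f x = f (fun i => min (x i) c) + f (fun i => x i - min (x i) c)

def IsPosHomogeneous (f : (ι → ℝ) → ℝ) : Prop :=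
  ∀ c : ℝ, 0 < c → ∀ x : ι → ℝ, f (c • x) = c * f x

namespace IsPosHomogeneous

theorem map_zero (hf : IsPosHomogeneous f) : f 0 = 0 := by
  have h := hf 2 two_pos 0
  rw [smul_zero] at h
  linarith

theorem map_smul_of_nonneg (hf : IsPosHomogeneous f) {c : ℝ} (hc : 0 ≤ c) (x : ι → ℝ) :
    f (c • x) = c * f x := by
  rcases hc.eq_or_lt with rfl | hc
  · rw [zero_smul, zero_mul, hf.map_zero]
  · exact hf c hc x

end IsPosHomogeneous

noncomputable def upperLevelValue (f : (ι → ℝ) → ℝ) (r : ι → ℕ) (k : ℕ) : ℝ :=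
  f ({i | k ≤ r i}.indicator 1)

namespace IsHorizMinAdditive

theorem map_const (hf : IsHorizMinAdditive f) (hh : IsPosHomogeneous f) (c : ℝ) :
    f (fun _ => c) = c * f 1 := by
  have hconst : ∀ t : ℝ, (fun _ : ι => t) = t • 1 := fun t => by ext; simp
  rcases le_total 0 c with hc | hc
  · rw [hconst, hh.map_smul_of_nonneg hc]
  · -- cutting the zero vector at height `c < 0` splits it into `c` and `-c`
    have h := hf 0 c
    simp only [Pi.zero_apply, min_eq_right hc, zero_sub] at h
    have hneg : f (fun _ => -c) = -c * f 1 := by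
      rw [hconst, hh.map_smul_of_nonneg (neg_nonneg.2 hc)]
    rw [hh.map_zero, hneg] at h
    linarith

theorem map_min_eq_add_indicator (hf : IsHorizMinAdditive f) (hh : IsPosHomogeneous f)
    {x : ι → ℝ} {c d : ℝ} (hcd : c ≤ d) (A : Set ι) (hA : ∀ i ∈ A, d ≤ x i)
    (hAc : ∀ i ∉ A, x i ≤ c) :
    f (fun i => min (x i) d) = f (fun i => min (x i) c) + (d - c) * f (A.indicator 1) := by
  have hcut : (fun i => min (x i) d - min (min (x i) d) c) = (d - c) • A.indicator 1 := by
    funext i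
    by_cases hi : i ∈ A
    · simp [hi, min_eq_right (hA i hi), min_eq_right hcd]
    · simp [hi, min_eq_left ((hAc i hi).trans hcd), min_eq_left (hAc i hi)]
  rw [hf (fun i => min (x i) d) c, hcut, hh.map_smul_of_nonneg (sub_nonneg.2 hcd)]
  simp only [min_assoc, min_eq_right hcd]

theorem map_min_rank_eq_sum (hf : IsHorizMinAdditive f) (hh : IsPosHomogeneous f)
    (r : ι → ℕ) {s : ℕ → ℝ} (hs : Monotone s) (m : ℕ) :
    f (fun i => min (s (r i)) (s m)) =
      ∑ k ∈ range m, (upperLevelValue f r k - upperLevelValue f r (k + 1)) * s k +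
        upperLevelValue f r m * s m := by
  induction m with
  | zero =>
    have hbot : (fun i => min (s (r i)) (s 0)) = fun _ => s 0 :=
      funext fun i => min_eq_right (hs (Nat.zero_le _))
    have huniv : {i | 0 ≤ r i}.indicator (1 : ι → ℝ) = 1 := by simp
    rw [hbot, hf.map_const hh, upperLevelValue, huniv]
    simp [mul_comm]
  | succ m ih =>
    have hstep : f (fun i => min (s (r i)) (s (m + 1))) = f (fun i => min (s (r i)) (s m)) +
        (s (m + 1) - s m) * upperLevelValue f r (m + 1) :=
      hf.map_min_eq_add_indicator hh (hs m.le_succ) _ (fun i hi => hs hi)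
        (fun i hi => hs (by simp at hi; omega))
    rw [hstep, ih, sum_range_succ]
    ring

theorem map_comp_eq_sum [Fintype ι] (hf : IsHorizMinAdditive f) (hh : IsPosHomogeneous f)
    {N : ℕ} (e : ι ≃ Fin N) {s : ℕ → ℝ} (hs : Monotone s) :
    f (fun i => s (e i)) = ∑ i, (upperLevelValue f (fun i => e i) (e i) -
      upperLevelValue f (fun i => e i) (e i + 1)) * s (e i) := by
  have htop : (fun i => min (s (e i)) (s N)) = fun i => s (e i) :=
    funext fun i => min_eq_left (hs (e i).isLt.le)
  have hempty : upperLevelValue f (fun i => e i) N = 0 := by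
    have : {i | N ≤ (e i : ℕ)} = ∅ := Set.eq_empty_of_forall_notMem fun i hi => by
      simp only [Set.mem_ofPred_eq] at hi
      exact absurd (e i).isLt (not_lt.2 hi)
    rw [upperLevelValue, this, Set.indicator_empty]
    exact hh.map_zero
  rw [← htop, hf.map_min_rank_eq_sum hh _ hs N, hempty, zero_mul, add_zero,
    ← Fin.sum_univ_eq_sum_range, ← e.sum_comp]

end IsHorizMinAdditive

end

theorem IsHorizMinAdditive.isLovasz {n : ℕ} {f : (Fin n → ℝ) → ℝ} (hf : IsHorizMinAdditive f)
    (hh : IsPosHomogeneous f) : IsLovasz f := by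
  intro σ
  obtain _ | N := n
  · exact ⟨0, 0, fun x _ => by rw [Subsingleton.elim x 0, hh.map_zero]; simp⟩
  refine ⟨fun i => upperLevelValue f (fun i => σ.symm i) (σ.symm i) -
    upperLevelValue f (fun i => σ.symm i) (σ.symm i + 1), 0, fun x hx => ?_⟩
  -- `Fin.clamp` extends `x ∘ σ` to a monotone sequence on `ℕ`
  have hclamp : Monotone fun k => Fin.clamp k N := fun a b hab =>
    Fin.le_def.2 (min_le_min_right N hab)
  have hxs : ∀ i, x (σ (Fin.clamp (σ.symm i) N)) = x i := fun i => by
    simp [Fin.clamp, Nat.le_of_lt_succ (σ.symm i).isLt]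
  have h := hf.map_comp_eq_sum hh σ.symm (hx.comp hclamp)
  simp only [Function.comp_apply, hxs] at h
  rw [add_zero]
  exact h

namespace IsLovasz

variable {n : ℕ} {f : (Fin n → ℝ) → ℝ}

/-- On the cone where `x` is sorted, `f` is linear; every `g ∘ x` with `g` monotone lies in
that cone. -/
theorem exists_map_comp_eq_sum (hL : IsLovasz f) (h0 : f 0 = 0) (x : Fin n → ℝ) :
    ∃ a : Fin n → ℝ, ∀ g : ℝ → ℝ, Monotone g → f (g ∘ x) = ∑ i, a i * g (x i) := by
  obtain ⟨a, b, hab⟩ := hL (Tuple.sort x)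
  have hb : b = 0 := by simpa [h0, eq_comm] using hab 0 monotone_const
  exact ⟨a, fun g hg => by rw [hab _ (hg.comp (Tuple.monotone_sort x)), hb, add_zero]; rfl⟩

theorem isHorizMinAdditive (hL : IsLovasz f) (h0 : f 0 = 0) : IsHorizMinAdditive f := by
  intro x c
  obtain ⟨a, ha⟩ := hL.exists_map_comp_eq_sum h0 x
  have hcut : Monotone fun t : ℝ => t - min t c := fun s t hst => by
    rcases le_total s c with hs | hs <;> rcases le_total t c with ht | ht <;>
      simp only [min_eq_left, min_eq_right, hs, ht] <;> linarith
  have hx : f x = ∑ i, a i * x i := ha id monotone_id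
  have hlow : f (fun i => min (x i) c) = ∑ i, a i * min (x i) c :=
    ha _ (monotone_id.min monotone_const)
  have hhigh : f (fun i => x i - min (x i) c) = ∑ i, a i * (x i - min (x i) c) := ha _ hcut
  rw [hx, hlow, hhigh, ← sum_add_distrib]
  exact sum_congr rfl fun i _ => by ring

theorem isPosHomogeneous (hL : IsLovasz f) (h0 : f 0 = 0) : IsPosHomogeneous f := by
  intro c hc x
  obtain ⟨a, ha⟩ := hL.exists_map_comp_eq_sum h0 x
  have hx : f x = ∑ i, a i * x i := ha id monotone_id
  have hcx : f (c • x) = ∑ i, a i * (c * x i) := ha _ (monotone_mul_left_of_nonneg hc.le)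
  rw [hx, hcx, mul_sum]
  exact sum_congr rfl fun i _ => by ring

end IsLovasz

/-- for `f : ℝⁿ → ℝ` with `f(0) = 0`, `f` is a Lovász extension
iff `f` is horizontally min-additive and positively homogeneous of degree one. -/
theorem lovasz_iff_horizMinAdd_posHom {n : ℕ} (f : (Fin n → ℝ) → ℝ)
    (h0 : f (fun _ => 0) = 0) :
    IsLovasz f ↔
      ((∀ (x : Fin n → ℝ) (c : ℝ),
          f x = f (fun i => min (x i) c) + f (fun i => x i - min (x i) c)) ∧
        ∀ c : ℝ, 0 < c → ∀ x : Fin n → ℝ, f (c • x) = c * f x) :=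
  ⟨fun hL => ⟨hL.isHorizMinAdditive h0, hL.isPosHomogeneous h0⟩,
    fun ⟨hf, hh⟩ => IsHorizMinAdditive.isLovasz hf hh⟩
end

section
/- Assume I is a real interval centered at 0. A function f : Iⁿ → ℝ is horizontally median-additive if and only if f is positively horizontally min-additive, negatively horizontally max-additive, and satisfies f(x) = f(x⁺) + f(-x⁻) for all x ∈ Iⁿ. -/
/-- `f` is horizontally median-additive on `Iⁿ` (`I` centered at `0`). -/
def HorizMedAdd {n : ℕ} (I : Set ℝ) (f : (Fin n → ℝ) → ℝ) : Prop :=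
  ∀ x : Fin n → ℝ, (∀ i, x i ∈ I) → ∀ c ∈ I, 0 ≤ c →
    f x = f (fun i => max (-c) (min (x i) c)) +
      f (fun i => x i - min (x i) c) + f (fun i => x i - max (x i) (-c))

/-- `f` is positively horizontally min-additive. -/
def PosHorizMinAdd {n : ℕ} (I : Set ℝ) (f : (Fin n → ℝ) → ℝ) : Prop :=
  ∀ x : Fin n → ℝ, (∀ i, x i ∈ I ∧ 0 ≤ x i) → ∀ c ∈ I, 0 ≤ c →
    f x = f (fun i => min (x i) c) + f (fun i => x i - min (x i) c)

/-- `f` is negatively horizontally max-additive. -/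
def NegHorizMaxAdd {n : ℕ} (I : Set ℝ) (f : (Fin n → ℝ) → ℝ) : Prop :=
  ∀ x : Fin n → ℝ, (∀ i, x i ∈ I ∧ x i ≤ 0) → ∀ c ∈ I, c ≤ 0 →
    f x = f (fun i => max (x i) c) + f (fun i => x i - max (x i) c)

/-- horizontal median-additivity is equivalent to the conjunction
of positive horizontal min-additivity, negative horizontal max-additivity and
`f(x) = f(x⁺) + f(-x⁻)`. -/
theorem horizMedAdd_iff {n : ℕ} (I : Set ℝ) (hI : I.OrdConnected)
    (h0 : (0 : ℝ) ∈ I) (hnt : ∃ x ∈ I, x ≠ 0) (hsym : ∀ x ∈ I, -x ∈ I)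
    (f : (Fin n → ℝ) → ℝ) :
    HorizMedAdd I f ↔
      (PosHorizMinAdd I f ∧ NegHorizMaxAdd I f ∧
        ∀ x : Fin n → ℝ, (∀ i, x i ∈ I) →
          f x = f (fun i => max (x i) 0) + f (fun i => min (x i) 0)) := by
  have mem : ∀ a ∈ I, ∀ b ∈ I, ∀ t : ℝ, a ≤ t → t ≤ b → t ∈ I := by
    intro a ha b hb t h1 h2
    exact hI.out ha hb ⟨h1, h2⟩
  constructor
  · intro hmed
    have h00 : f (fun _ => 0) = 0 := by
      have h := hmed (fun _ => 0) (fun _ => h0) 0 h0 le_rfl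
      simp only [neg_zero, min_self, max_self, sub_zero] at h
      linarith
    have hthird : ∀ x : Fin n → ℝ, (∀ i, x i ∈ I) →
        f x = f (fun i => max (x i) 0) + f (fun i => min (x i) 0) := by
      intro x hx
      have h := hmed x hx 0 h0 le_rfl
      have e1 : (fun i => max (-(0:ℝ)) (min (x i) 0)) = (fun _ => (0:ℝ)) := by
        funext i
        rw [neg_zero, max_eq_left (min_le_right _ _)]
      have e2 : (fun i => x i - min (x i) 0) = (fun i => max (x i) 0) := by
        funext i
        rcases le_total (x i) 0 with hh | hh
        · rw [min_eq_left hh, max_eq_right hh, sub_self]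
        · rw [min_eq_right hh, max_eq_left hh, sub_zero]
      have e3 : (fun i => x i - max (x i) (-(0:ℝ))) = (fun i => min (x i) 0) := by
        funext i
        rw [neg_zero]
        rcases le_total (x i) 0 with hh | hh
        · rw [max_eq_right hh, min_eq_left hh, sub_zero]
        · rw [max_eq_left hh, min_eq_right hh, sub_self]
      rw [e1, e2, e3, h00] at h
      linarith
    refine ⟨?_, ?_, hthird⟩
    · intro x hx c hc hc0
      have h := hmed x (fun i => (hx i).1) c hc hc0
      have e1 : (fun i => max (-c) (min (x i) c)) = (fun i => min (x i) c) := by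
        funext i
        exact max_eq_right ((neg_nonpos.mpr hc0).trans (le_min (hx i).2 hc0))
      have e3 : (fun i => x i - max (x i) (-c)) = (fun _ => (0:ℝ)) := by
        funext i
        rw [max_eq_left ((neg_nonpos.mpr hc0).trans (hx i).2), sub_self]
      rw [e1, e3, h00] at h
      linarith
    · intro x hx c hc hc0
      have hc' : -c ∈ I := hsym c hc
      have hc0' : 0 ≤ -c := neg_nonneg.mpr hc0
      have h := hmed x (fun i => (hx i).1) (-c) hc' hc0'
      rw [neg_neg] at h
      have e1 : (fun i => max c (min (x i) (-c))) = (fun i => max (x i) c) := by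
        funext i
        rw [min_eq_left ((hx i).2.trans hc0'), max_comm]
      have e2 : (fun i => x i - min (x i) (-c)) = (fun _ => (0:ℝ)) := by
        funext i
        rw [min_eq_left ((hx i).2.trans hc0'), sub_self]
      rw [e1, e2, h00] at h
      linarith
  · rintro ⟨hpos, hneg, hthird⟩
    intro x hx c hc hc0
    have hnc : -c ∈ I := hsym c hc
    have hnc0 : -c ≤ 0 := neg_nonpos.mpr hc0
    have hncc : -c ≤ c := hnc0.trans hc0
    have hxp : ∀ i, max (x i) 0 ∈ I ∧ 0 ≤ max (x i) 0 := by
      intro i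
      refine ⟨?_, le_max_right _ _⟩
      rcases le_total (x i) 0 with hh | hh
      · rw [max_eq_right hh]; exact h0
      · rw [max_eq_left hh]; exact hx i
    have hxm : ∀ i, min (x i) 0 ∈ I ∧ min (x i) 0 ≤ 0 := by
      intro i
      refine ⟨?_, min_le_right _ _⟩
      rcases le_total (x i) 0 with hh | hh
      · rw [min_eq_left hh]; exact hx i
      · rw [min_eq_right hh]; exact h0
    have h1 := hthird x hx
    have h2 := hpos (fun i => max (x i) 0) hxp c hc hc0
    have h3 := hneg (fun i => min (x i) 0) hxm (-c) hnc hnc0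
    have e2 : (fun i => max (x i) 0 - min (max (x i) 0) c) =
        (fun i => x i - min (x i) c) := by
      funext i
      rcases le_total (x i) 0 with hh | hh
      · rw [max_eq_right hh, min_eq_left hc0, min_eq_left (hh.trans hc0),
          sub_self, sub_self]
      · rw [max_eq_left hh]
    have e3 : (fun i => min (x i) 0 - max (min (x i) 0) (-c)) =
        (fun i => x i - max (x i) (-c)) := by
      funext i
      rcases le_total (x i) 0 with hh | hh
      · rw [min_eq_left hh]
      · rw [min_eq_right hh, max_eq_left hnc0, max_eq_left (hnc0.trans hh),
          sub_self, sub_self]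
    rw [e2] at h2
    rw [e3] at h3
    have hyI : ∀ i, max (-c) (min (x i) c) ∈ I := by
      intro i
      exact mem _ hnc _ hc _ (le_max_left _ _)
        (max_le hncc (min_le_right _ _))
    have h4 := hthird (fun i => max (-c) (min (x i) c)) hyI
    have e4 : (fun i => max (max (-c) (min (x i) c)) 0) =
        (fun i => min (max (x i) 0) c) := by
      funext i
      rcases le_total (x i) 0 with hh | hh
      · rw [min_eq_left (hh.trans hc0), max_eq_right (max_le hnc0 hh),
          max_eq_right hh, min_eq_left hc0]
      · rw [max_eq_right (hnc0.trans (le_min hh hc0)),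
          max_eq_left (le_min hh hc0), max_eq_left hh]
    have e5 : (fun i => min (max (-c) (min (x i) c)) 0) =
        (fun i => max (min (x i) 0) (-c)) := by
      funext i
      rcases le_total (x i) 0 with hh | hh
      · rw [min_eq_left (hh.trans hc0), min_eq_left (max_le hnc0 hh),
          min_eq_left hh, max_comm]
      · rw [max_eq_right (hnc0.trans (le_min hh hc0)),
          min_eq_right (le_min hh hc0), min_eq_right hh, max_eq_left hnc0]
    rw [e4, e5] at h4
    linarith
end

section
/- Every comonotonically additive function f : Iⁿ → ℝ on an interval I centered at 0 is horizontally median-additive, but the converse fails: there exists a horizontally median-additive function on ℝⁿ (n ≥ 1) that is not comonotonically additive. -/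
lemma comon_comp {n : ℕ} (x : Fin n → ℝ) {g h : ℝ → ℝ} (hg : Monotone g) (hh : Monotone h) :
    Comonotone (fun i => g (x i)) (fun i => h (x i)) := by
  refine ⟨Tuple.sort x, fun i j hij => hg (Tuple.monotone_sort x hij),
    fun i j hij => hh (Tuple.monotone_sort x hij)⟩

/-- comonotonic additivity implies horizontal median-additivity
on intervals centered at `0`, but the converse fails. -/
theorem comonAdd_implies_horizMedAdd_not_conversely :
    (∀ (n : ℕ) (I : Set ℝ), I.OrdConnected → (0 : ℝ) ∈ I →
      (∀ x ∈ I, -x ∈ I) → ∀ f : (Fin n → ℝ) → ℝ,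
        ComonAdd I f → HorizMedAdd I f) ∧
      ∃ (n : ℕ) (f : (Fin n → ℝ) → ℝ), 1 ≤ n ∧
        HorizMedAdd (Set.univ : Set ℝ) f ∧
          ¬ ComonAdd (Set.univ : Set ℝ) f := by
  constructor
  · intro n I hOrd h0 hsym f hf x hx c hcI hc0
    have hncI : -c ∈ I := hsym c hcI
    set a : Fin n → ℝ := fun i => max (-c) (min (x i) c) with ha
    set b : Fin n → ℝ := fun i => x i - min (x i) c with hb
    set d : Fin n → ℝ := fun i => x i - max (x i) (-c) with hd
    set u : Fin n → ℝ := fun i => max (x i) (-c) with hu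
    have hab : ∀ i, a i + b i = u i := by
      intro i
      simp only [ha, hb, hu]
      rcases le_total (x i) c with h | h
      · rw [min_eq_left h]; rw [max_comm]; ring_nf
      · rw [min_eq_right h, max_eq_right (by linarith : -c ≤ c), max_eq_left (by linarith)]; ring
    have hud : ∀ i, u i + d i = x i := by
      intro i; simp only [hu, hd]; ring
    -- memberships
    have haI : ∀ i, a i ∈ I := by
      intro i
      have : a i ∈ Set.Icc (-c) c := ⟨le_max_left _ _,
        max_le (by linarith) (min_le_right _ _)⟩
      exact hOrd.out hncI hcI this
    have hbI : ∀ i, b i ∈ I := by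
      intro i
      rcases le_total (x i) c with h | h
      · simp only [hb, min_eq_left h, sub_self]; exact h0
      · have : b i ∈ Set.Icc (0 : ℝ) (x i) := by
          constructor
          · simp only [hb, min_eq_right h]; linarith
          · simp only [hb, min_eq_right h]; linarith
        exact hOrd.out h0 (hx i) this
    have hdI : ∀ i, d i ∈ I := by
      intro i
      rcases le_total (-c) (x i) with h | h
      · simp only [hd, max_eq_left h, sub_self]; exact h0
      · have : d i ∈ Set.Icc (x i) (0 : ℝ) := by
          constructor
          · simp only [hd, max_eq_right h]; linarith
          · simp only [hd, max_eq_right h]; linarith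
        exact hOrd.out (hx i) h0 this
    have huI : ∀ i, u i ∈ I := by
      intro i
      rcases le_total (-c) (x i) with h | h
      · simpa only [hu, max_eq_left h] using hx i
      · simpa only [hu, max_eq_right h] using hncI
    -- comonotonicity
    have hcom1 : Comonotone u d :=
      comon_comp x (g := fun t => max t (-c)) (h := fun t => t - max t (-c))
        (fun s t hst => max_le_max hst le_rfl)
        (fun s t hst => by
          simp only
          rcases le_total (-c) s with h | h
          · rw [max_eq_left h, max_eq_left (h.trans hst)]; linarith
          · rw [max_eq_right h]; simp only [sub_le_iff_le_add]
            rcases le_total (-c) t with h2 | h2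
            · rw [max_eq_left h2]; linarith
            · rw [max_eq_right h2]; linarith)
    have hcom2 : Comonotone a b :=
      comon_comp x (g := fun t => max (-c) (min t c)) (h := fun t => t - min t c)
        (fun s t hst => max_le_max le_rfl (min_le_min hst le_rfl))
        (fun s t hst => by
          simp only
          rcases le_total s c with h | h
          · rw [min_eq_left h]
            rcases le_total t c with h2 | h2
            · rw [min_eq_left h2]; linarith
            · rw [min_eq_right h2]; linarith
          · rw [min_eq_right h, min_eq_right (h.trans hst)]; linarith)
    have e1 : f x = f u + f d := by
      have := hf u d huI hdI (fun i => by rw [hud i]; exact hx i) hcom1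
      rwa [show u + d = x from funext fun i => hud i] at this
    have e2 : f u = f a + f b := by
      have := hf a b haI hbI (fun i => by rw [hab i]; exact huI i) hcom2
      rwa [show a + b = u from funext fun i => hab i] at this
    rw [e1, e2]
  · refine ⟨1, fun x => max (x 0) 0, le_refl 1, ?_, ?_⟩
    · intro x _ c _ hc0
      simp only [max_def, min_def]
      split_ifs <;> linarith
    · intro h
      have hcom : Comonotone (fun _ : Fin 1 => (1 : ℝ)) (fun _ : Fin 1 => (-1 : ℝ)) :=
        ⟨Equiv.refl _, fun i j _ => le_rfl, fun i j _ => le_rfl⟩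
      have := h (fun _ => 1) (fun _ => -1) (fun _ => Set.mem_univ _)
        (fun _ => Set.mem_univ _) (fun _ => Set.mem_univ _) hcom
      simp only [Pi.add_apply] at this
      norm_num at this
end

section
/- Let f : ℝⁿ → ℝ be a Lovász extension and g : ℝⁿ → ℝ the symmetric Lovász extension of the same underlying pseudo-Boolean function (so f and g agree on {0,1}ⁿ), and let f₀ = f - f(0). Then f = g if and only if f₀(-x) = -f₀(x) for every x in the nonnegative orthant [0,∞)ⁿ. -/
/-- a Lovász extension `f` equals the symmetric Lovász extension
`g(x) = f(0) + f(x⁺) - f(x⁻)` of the same pseudo-Boolean function iff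
`f₀ = f - f(0)` is odd on the nonnegative orthant. -/
theorem lovasz_eq_symmetric_iff {n : ℕ} (f g : (Fin n → ℝ) → ℝ)
    (hf : IsLovasz f)
    (hg : ∀ x : Fin n → ℝ,
      g x = f (fun _ => 0) + f (fun i => max (x i) 0) - f (fun i => max (-x i) 0)) :
    f = g ↔
      ∀ x : Fin n → ℝ, (∀ i, 0 ≤ x i) →
        f (-x) - f (fun _ => 0) = -(f x - f (fun _ => 0)) := by
  constructor
  · intro hfg x hx
    have h := hg (-x)
    rw [← hfg] at h
    have h1 : (fun i => max ((-x) i) 0) = (fun _ : Fin n => (0:ℝ)) := by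
      funext i; simp [Pi.neg_apply, max_eq_right, neg_nonpos.mpr (hx i)]
    have h2 : (fun i => max (-(-x) i) 0) = x := by
      funext i; simp [Pi.neg_apply, max_eq_left (hx i)]
    rw [h1, h2] at h
    linarith
  · intro hodd
    funext x
    obtain ⟨a, b, hab⟩ := hf (Tuple.sort x)
    have hmon : Monotone (x ∘ Tuple.sort x) := Tuple.monotone_sort x
    have hxp : Monotone ((fun i => max (x i) 0) ∘ Tuple.sort x) :=
      fun i j hij => max_le_max (hmon hij) le_rfl
    have hxm : Monotone ((fun i => min (x i) 0) ∘ Tuple.sort x) :=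
      fun i j hij => min_le_min (hmon hij) le_rfl
    have h0 : Monotone ((fun _ : Fin n => (0:ℝ)) ∘ Tuple.sort x) := monotone_const
    have e1 := hab x hmon
    have e2 := hab _ hxp
    have e3 := hab _ hxm
    have e4 := hab _ h0
    have hneg : (fun i => min (x i) 0) = -(fun i => max (-x i) 0) := by
      funext i
      simp [neg_sup]
    have hodd' := hodd (fun i => max (-x i) 0) (fun i => le_max_right _ _)
    rw [← hneg] at hodd'
    have hsum : ((∑ i, a i * max (x i) 0) + ∑ i, a i * min (x i) 0) = ∑ i, a i * x i := by
      rw [← Finset.sum_add_distrib]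
      congr 1; funext i
      rw [← mul_add, max_add_min, add_zero]
    rw [hg x]
    simp only [Finset.sum_const_zero, mul_zero] at e4
    linarith
end
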